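/- arXiv:1406.2057 — 9 statements merged into one kernel-verified Lean document; each statement's English description precedes it below -/
import Mathlib

section
/- Let p be a prime and A a commutative ring of characteristic p. Let a and b be p-typical Witt vectors over A and let m, n be natural numbers such that a.coeff i = 0 for all i < m and b.coeff j = 0 for all j < n. Then (a * b).coeff k = 0 for all k < m + n. -/
open WittVector

theorem witt_iter_versch_coeff_zero (p : ℕ) [hp : Fact p.Prime] (A : Type*) [CommRing A]
    (x : WittVector p A) (r : ℕ) : ∀ k < r, (verschiebung^[r] x).coeff k = 0 := by
  induction r with
  | zero => intro k hk; omega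
  | succ r ih =>
    intro k hk
    rw [Function.iterate_succ_apply']
    cases k with
    | zero => exact verschiebung_coeff_zero _
    | succ k => rw [verschiebung_coeff_succ]; exact ih k (by omega)

theorem witt_mul_coeff_vanish (p : ℕ) [hp : Fact p.Prime] (A : Type*) [CommRing A] [CharP A p]
    (a b : WittVector p A) (m n : ℕ)
    (ha : ∀ i < m, a.coeff i = 0) (hb : ∀ j < n, b.coeff j = 0) :
    ∀ k < m + n, (a * b).coeff k = 0 := by
  intro k hk
  rw [eq_iterate_verschiebung ha, eq_iterate_verschiebung hb, iterate_verschiebung_mul]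
  exact witt_iter_versch_coeff_zero p A _ _ k hk
end

section
/- Let p be a prime and A a commutative ring. Let a and b be p-typical Witt vectors over A whose supports are disjoint, i.e., for every n, a.coeff n = 0 or b.coeff n = 0. Then addition is componentwise on a and b: for every n, (a + b).coeff n = a.coeff n + b.coeff n. -/
set_option synthInstance.maxHeartbeats 1000000
set_option maxHeartbeats 1600000

open MvPolynomial Finset

namespace WittDisjointAux

variable {R : Type*} [CommRing R]

/-- The ideal of relations `x_i y_i = 0`. -/
noncomputable def relIdeal (R : Type*) [CommRing R] : Ideal (MvPolynomial (Bool × ℕ) R) :=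
  Ideal.span (Set.range fun i : ℕ => (X (false, i) : MvPolynomial (Bool × ℕ) R) * X (true, i))

/-- A monomial exponent is "bad" if it is divisible by some `x_i y_i`. -/
def Bad (d : (Bool × ℕ) →₀ ℕ) : Prop := ∃ i : ℕ, d (false, i) ≠ 0 ∧ d (true, i) ≠ 0

lemma gen_eq (i : ℕ) : (X (false, i) : MvPolynomial (Bool × ℕ) R) * X (true, i)
    = monomial (Finsupp.single ((false : Bool), i) 1 + Finsupp.single ((true : Bool), i) 1) 1 := by
  rw [X, X, monomial_mul, one_mul]

/-- The set of polynomials all of whose monomials are bad, as an ideal. -/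
noncomputable def badIdeal (R : Type*) [CommRing R] : Ideal (MvPolynomial (Bool × ℕ) R) where
  carrier := {f | ∀ d ∈ f.support, Bad d}
  add_mem' := by
    intro f g hf hg d hd
    classical
    rcases Finset.mem_union.mp (MvPolynomial.support_add hd) with h' | h'
    · exact hf d h'
    · exact hg d h'
  zero_mem' := by
    intro d hd
    simp at hd
  smul_mem' := by
    intro c f hf d hd
    classical
    rw [smul_eq_mul] at hd
    have := MvPolynomial.support_mul c f hd
    rcases Finset.mem_add.mp this with ⟨d1, hd1, d2, hd2, rfl⟩
    obtain ⟨i, h1, h2⟩ := hf d2 hd2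
    refine ⟨i, ?_, ?_⟩ <;> simp only [Finsupp.add_apply] <;> omega

lemma mem_relIdeal_iff (f : MvPolynomial (Bool × ℕ) R) :
    f ∈ relIdeal R ↔ ∀ d ∈ f.support, Bad d := by
  classical
  constructor
  · intro hf
    have : relIdeal R ≤ badIdeal R := by
      rw [relIdeal, Ideal.span_le]
      rintro _ ⟨i, rfl⟩
      intro d hd
      simp only at hd
      rw [gen_eq] at hd
      have hd' := MvPolynomial.support_monomial_subset hd
      rw [Finset.mem_singleton] at hd'
      subst hd'
      exact ⟨i, by simp [Finsupp.add_apply, Finsupp.single_apply], by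
        simp [Finsupp.add_apply, Finsupp.single_apply]⟩
    exact this hf
  · intro hf
    rw [← MvPolynomial.support_sum_monomial_coeff f]
    refine Ideal.sum_mem _ ?_
    intro d hd
    obtain ⟨i, h1, h2⟩ := hf d hd
    set e : (Bool × ℕ) →₀ ℕ :=
      Finsupp.single ((false : Bool), i) 1 + Finsupp.single ((true : Bool), i) 1 with he
    have hle : e ≤ d := by
      intro s
      rcases s with ⟨bb, j⟩
      simp only [he, Finsupp.add_apply, Finsupp.single_apply]
      by_cases hb : bb = false
      · subst hb
        by_cases hj : j = i
        · subst hj; simp; omega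
        · simp [Ne.symm hj, hj]
      · have hb' : bb = true := by simpa using hb
        subst hb'
        by_cases hj : j = i
        · subst hj; simp; omega
        · simp [Ne.symm hj, hj]
    have : (monomial d (coeff d f) : MvPolynomial (Bool × ℕ) R)
        = ((X (false, i) : MvPolynomial (Bool × ℕ) R) * X (true, i))
          * monomial (d - e) (coeff d f) := by
      rw [gen_eq, monomial_mul, one_mul, ← he, add_tsub_cancel_of_le hle]
    rw [this]
    exact Ideal.mul_mem_right _ _ (Ideal.subset_span ⟨i, rfl⟩)

lemma map_mem_relIdeal_iff (f : MvPolynomial (Bool × ℕ) ℤ) :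
    (MvPolynomial.map (Int.castRingHom ℚ) f) ∈ relIdeal ℚ ↔ f ∈ relIdeal ℤ := by
  rw [mem_relIdeal_iff, mem_relIdeal_iff,
    MvPolynomial.support_map_of_injective _ Int.cast_injective]

lemma add_pow_of_mul_eq_zero {S : Type*} [CommRing S] (u v : S) (huv : u * v = 0) :
    ∀ m : ℕ, 1 ≤ m → (u + v) ^ m = u ^ m + v ^ m := by
  intro m
  induction m with
  | zero => omega
  | succ k ih =>
    intro _
    by_cases hk : k = 0
    · subst hk; simp
    · have hk1 : 1 ≤ k := Nat.one_le_iff_ne_zero.mpr hk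
      obtain ⟨j, rfl⟩ := Nat.exists_eq_succ_of_ne_zero hk
      simp only [Nat.succ_eq_add_one] at ih ⊢
      have h1 : u * v ^ (j + 1) = 0 := by
        rw [pow_succ', ← mul_assoc, huv, zero_mul]
      have h2 : v * u ^ (j + 1) = 0 := by
        rw [pow_succ', ← mul_assoc, mul_comm v u, huv, zero_mul]
      calc (u + v) ^ (j + 1 + 1) = (u + v) * (u + v) ^ (j + 1) := by rw [pow_succ']
        _ = u * u ^ (j + 1) + (u * v ^ (j + 1) + v * u ^ (j + 1)) + v * v ^ (j + 1) := by
            rw [ih hk1]; ring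
        _ = u ^ (j + 1 + 1) + v ^ (j + 1 + 1) := by
            rw [h1, h2, add_zero, add_zero, ← pow_succ', ← pow_succ']

noncomputable abbrev T : Type := MvPolynomial (Bool × ℕ) ℤ

noncomputable abbrev Qz : Type := T ⧸ relIdeal ℤ

noncomputable abbrev Qq : Type := MvPolynomial (Bool × ℕ) ℚ ⧸ relIdeal ℚ

end WittDisjointAux

open WittDisjointAux

theorem witt_add_disjoint_support (p : ℕ) [hp : Fact p.Prime] (A : Type*) [CommRing A]
    (a b : WittVector p A) (h : ∀ n : ℕ, a.coeff n = 0 ∨ b.coeff n = 0) :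
    ∀ n : ℕ, (a + b).coeff n = a.coeff n + b.coeff n := by
  classical
  -- the universal rings
  set θ : T →+* Qz := Ideal.Quotient.mk (relIdeal ℤ) with hθ
  -- the comparison map Q → Qq
  have hcomp : ∀ f ∈ relIdeal ℤ,
      (Ideal.Quotient.mk (relIdeal ℚ)).comp
        (MvPolynomial.map (Int.castRingHom ℚ) : T →+* MvPolynomial (Bool × ℕ) ℚ) f = 0 := by
    intro f hf
    simp only [RingHom.comp_apply]
    rw [Ideal.Quotient.eq_zero_iff_mem]
    exact (map_mem_relIdeal_iff f).mpr hf
  set ρ : Qz →+* Qq := Ideal.Quotient.lift (relIdeal ℤ) _ hcomp with hρ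
  have hρ_inj : Function.Injective ρ := by
    rw [injective_iff_map_eq_zero]
    intro x hx
    obtain ⟨f, rfl⟩ := Ideal.Quotient.mk_surjective x
    rw [hρ, Ideal.Quotient.lift_mk, RingHom.comp_apply, Ideal.Quotient.eq_zero_iff_mem] at hx
    rw [Ideal.Quotient.eq_zero_iff_mem]
    exact (map_mem_relIdeal_iff f).mp hx
  -- p is invertible in Qq
  have hp0 : (p : ℚ) ≠ 0 := by exact_mod_cast hp.out.ne_zero
  set ι : ℚ →+* Qq := (Ideal.Quotient.mk (relIdeal ℚ)).comp (C : ℚ →+* MvPolynomial (Bool × ℕ) ℚ)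
    with hι
  haveI : Invertible (p : Qq) :=
    { invOf := ι ((p : ℚ)⁻¹)
      invOf_mul_self := by
        rw [← map_natCast ι p, ← map_mul, inv_mul_cancel₀ hp0, map_one]
      mul_invOf_self := by
        rw [← map_natCast ι p, ← map_mul, mul_inv_cancel₀ hp0, map_one] }
  -- the universal Witt vectors
  set a₀ : WittVector p Qz := WittVector.mk p fun k => θ (X (false, k)) with ha₀
  set b₀ : WittVector p Qz := WittVector.mk p fun k => θ (X (true, k)) with hb₀
  set c₀ : WittVector p Qz := WittVector.mk p fun k => θ (X (false, k)) + θ (X (true, k)) with hc₀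
  -- products vanish in Qq
  have hmulzero : ∀ i : ℕ, ρ (θ (X (false, i))) * ρ (θ (X (true, i))) = 0 := by
    intro i
    have hz : θ ((X (false, i) : T) * X (true, i)) = 0 := by
      rw [hθ, Ideal.Quotient.eq_zero_iff_mem]
      exact Ideal.subset_span ⟨i, rfl⟩
    rw [← map_mul, ← map_mul, hz, map_zero]
  -- main identity in Q, via ghost components over Qq
  have key : a₀ + b₀ = c₀ := by
    apply WittVector.map_injective ρ hρ_inj
    apply (WittVector.ghostMap.bijective_of_invertible p Qq).injective
    rw [RingHom.map_add (WittVector.map ρ), RingHom.map_add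
      (WittVector.ghostMap : WittVector p Qq →+* ℕ → Qq)]
    funext n
    simp only [Pi.add_apply, WittVector.ghostMap_apply, WittVector.ghostComponent_apply,
      aeval_wittPolynomial]
    rw [← Finset.sum_add_distrib]
    refine Finset.sum_congr rfl ?_
    intro i _
    have hcoeff : ∀ (x : WittVector p Qz) (k : ℕ),
        (WittVector.map ρ x).coeff k = ρ (x.coeff k) := fun x k => WittVector.map_coeff ρ x k
    rw [hcoeff, hcoeff, hcoeff, ha₀, hb₀, hc₀]
    simp only [WittVector.coeff_mk]
    rw [map_add]
    rw [add_pow_of_mul_eq_zero _ _ (hmulzero i) _ (Nat.one_le_iff_ne_zero.mpr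
      (pow_ne_zero _ hp.out.ne_zero))]
    ring
  -- evaluation homomorphism Q → A
  set val : Bool × ℕ → A := fun s => if s.1 then b.coeff s.2 else a.coeff s.2 with hval
  set φ : T →+* A := MvPolynomial.eval₂Hom (Int.castRingHom A) val with hφ
  have hker : ∀ f ∈ relIdeal ℤ, φ f = 0 := by
    intro f hf
    have : relIdeal ℤ ≤ RingHom.ker φ := by
      rw [relIdeal, Ideal.span_le]
      rintro _ ⟨i, rfl⟩
      have : φ ((X (false, i) : T) * X (true, i)) = a.coeff i * b.coeff i := by
        simp [hφ, hval]
      rw [SetLike.mem_coe, RingHom.mem_ker, this]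
      rcases h i with h' | h'
      · rw [h', zero_mul]
      · rw [h', mul_zero]
    exact this hf
  set ψ : Qz →+* A := Ideal.Quotient.lift (relIdeal ℤ) φ hker with hψ
  have hψa : ∀ k, ψ (θ (X (false, k))) = a.coeff k := by
    intro k
    rw [hψ, hθ, Ideal.Quotient.lift_mk, hφ]
    simp [hval]
  have hψb : ∀ k, ψ (θ (X (true, k))) = b.coeff k := by
    intro k
    rw [hψ, hθ, Ideal.Quotient.lift_mk, hφ]
    simp [hval]
  have hmapa : WittVector.map ψ a₀ = a := by
    ext k
    rw [WittVector.map_coeff, ha₀, WittVector.coeff_mk, hψa]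
  have hmapb : WittVector.map ψ b₀ = b := by
    ext k
    rw [WittVector.map_coeff, hb₀, WittVector.coeff_mk, hψb]
  intro n
  calc (a + b).coeff n = (WittVector.map ψ (a₀ + b₀)).coeff n := by
        rw [RingHom.map_add (WittVector.map ψ), hmapa, hmapb]
    _ = ψ ((a₀ + b₀).coeff n) := WittVector.map_coeff ψ _ n
    _ = ψ (c₀.coeff n) := by rw [key]
    _ = a.coeff n + b.coeff n := by
        rw [hc₀, WittVector.coeff_mk, map_add, hψa, hψb]
end

section
/- Let p be a prime, A a commutative ring, a a p-typical Witt vector over A, and m a natural number. For each n, let δ(n) denote the Witt vector whose n-th coefficient is a.coeff n and whose other coefficients are all 0 (i.e., WittVector.mk p (fun i => if i = n then a.coeff n else 0)). Then for every i < m, (∑_{n ∈ Finset.range m} δ(n)).coeff i = a.coeff i. -/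
lemma witt_partial_sum_coeff (p : ℕ) [hp : Fact p.Prime] (A : Type*) [CommRing A]
    (a : WittVector p A) (m : ℕ) :
    ∀ i, (∑ n ∈ Finset.range m,
        WittVector.mk p (fun j => if j = n then a.coeff n else 0)).coeff i =
      if i < m then a.coeff i else 0 := by
  induction m with
  | zero => intro i; simp [WittVector.zero_coeff]
  | succ m ih =>
    intro i
    rw [Finset.sum_range_succ]
    rw [WittVector.coeff_add_of_disjoint]
    · rw [ih, WittVector.coeff_mk]
      by_cases h1 : i < m
      · rw [if_pos h1, if_neg (by omega), add_zero, if_pos (by omega)]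
      · rw [if_neg h1]
        by_cases h2 : i = m
        · rw [if_pos h2, if_pos (by omega), zero_add, h2]
        · rw [if_neg h2, if_neg (by omega), add_zero]
    · intro n
      by_cases h : n = m
      · left; rw [ih, if_neg (by omega)]
      · right; rw [WittVector.coeff_mk, if_neg h]

theorem witt_teichmuller_parts_sum (p : ℕ) [hp : Fact p.Prime] (A : Type*) [CommRing A]
    (a : WittVector p A) (m : ℕ) :
    ∀ i < m,
      (∑ n ∈ Finset.range m,
          WittVector.mk p (fun j => if j = n then a.coeff n else 0)).coeff i = a.coeff i := by
  intro i hi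
  rw [witt_partial_sum_coeff, if_pos hi]
end

section
/- Let p be a prime and n a natural number. Give the variables of MvPolynomial (Fin 2 × ℕ) ℤ the weights w(b, i) = p^i. Then the n-th Witt addition polynomial wittAdd p n is weighted homogeneous of degree p^n, and the n-th Witt multiplication polynomial wittMul p n is weighted homogeneous of degree 2·p^n, with respect to these weights. -/
/-!
Over `ℚ`, the Witt structure polynomial of `Φ` is obtained by substituting
`Φ(W_k(X_{0,·}), W_k(X_{1,·}), …)` for `X_k` in `X_n` written in terms of Witt polynomials.
The Witt polynomial `W_k = ∑ p^i X_i^{p^(k-i)}` is homogeneous of degree `p^k` when `X_i` has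
weight `p^i`; so is its triangular inverse, and substitution of weighted homogeneous polynomials
into one another preserves weighted homogeneity, so a `Φ` homogeneous of degree `c` yields
degree `c * p^n`. The integral structure polynomials embed
injectively into the rational ones.
-/

open MvPolynomial Finset

namespace MvPolynomial.IsWeightedHomogeneous

variable {σ τ M R S : Type*} [AddCommMonoid M] [CommSemiring R]

theorem bind₁ {w : τ → M} {u : σ → M} {f : σ → MvPolynomial τ R}
    (hf : ∀ i, IsWeightedHomogeneous w (f i) (u i))
    {φ : MvPolynomial σ R} {m : M} (hφ : IsWeightedHomogeneous u φ m) :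
    IsWeightedHomogeneous w (MvPolynomial.bind₁ f φ) m := by
  conv_lhs => rw [φ.as_sum]
  rw [map_sum]
  refine sum _ _ _ fun d hd => ?_
  rw [bind₁_monomial, ← hφ (mem_support_iff.mp hd), Finsupp.weight_apply]
  exact (prod _ _ _ fun i _ => (hf i).pow (d i)).C_mul _

theorem rename {w : τ → M} {φ : MvPolynomial σ R} {m : M} (f : σ → τ)
    (hφ : IsWeightedHomogeneous (w ∘ f) φ m) :
    IsWeightedHomogeneous w (MvPolynomial.rename f φ) m := by
  rw [rename_eq_aeval, aeval_eq_bind₁]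
  exact hφ.bind₁ fun i => isWeightedHomogeneous_X R w (f i)

theorem nsmul_weight {w : σ → M} {φ : MvPolynomial σ R} {m : M}
    (hφ : IsWeightedHomogeneous w φ m) (c : ℕ) :
    IsWeightedHomogeneous (c • w) φ (c • m) := by
  intro d hd
  simp only [← hφ hd, Finsupp.weight_apply, Finsupp.smul_sum, Pi.smul_apply, smul_comm c]

theorem of_map [CommSemiring S] {f : R →+* S} (hf : Function.Injective f)
    {w : σ → M} {φ : MvPolynomial σ R} {m : M}
    (h : IsWeightedHomogeneous w (MvPolynomial.map f φ) m) :
    IsWeightedHomogeneous w φ m := fun d hd =>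
  h <| by rwa [coeff_map, ne_eq, map_eq_zero_iff f hf]

end MvPolynomial.IsWeightedHomogeneous

namespace WittVector

variable (p : ℕ) {R : Type*} [CommRing R]

theorem isWeightedHomogeneous_wittPolynomial (n : ℕ) :
    IsWeightedHomogeneous (fun i : ℕ => p ^ i) (wittPolynomial p R n) (p ^ n) := by
  rw [wittPolynomial_eq_sum_C_mul_X_pow]
  refine IsWeightedHomogeneous.sum _ _ _ fun i hi => ?_
  rw [← pow_sub_mul_pow p (Nat.lt_succ_iff.mp (mem_range.mp hi))]
  exact ((isWeightedHomogeneous_X R _ i).pow _).C_mul _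

theorem isWeightedHomogeneous_xInTermsOfW [Invertible (p : R)] (n : ℕ) :
    IsWeightedHomogeneous (fun i : ℕ => p ^ i) (xInTermsOfW p R n) (p ^ n) := by
  induction n using Nat.strong_induction_on with
  | _ n ih =>
    rw [xInTermsOfW_eq, mul_comm]
    refine ((isWeightedHomogeneous_X R _ n).sub
      (IsWeightedHomogeneous.sum _ _ _ fun i hi => ?_)).C_mul _
    rw [← pow_sub_mul_pow p (mem_range.mp hi).le]
    exact ((ih i (mem_range.mp hi)).pow _).C_mul _

variable [Fact p.Prime] {idx : Type*}

theorem isWeightedHomogeneous_wittStructureRat {Φ : MvPolynomial idx ℚ} {c : ℕ}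
    (hΦ : Φ.IsHomogeneous c) (n : ℕ) :
    IsWeightedHomogeneous (fun bi : idx × ℕ => p ^ bi.2) (wittStructureRat p Φ n) (c * p ^ n) :=
  (isWeightedHomogeneous_xInTermsOfW p n).nsmul_weight c |>.bind₁ fun k => by
    have hΦk : IsWeightedHomogeneous (fun _ : idx => p ^ k) Φ (c * p ^ k) := by
      rw [mul_comm]
      convert hΦ.nsmul_weight (p ^ k) <;> simp
    exact hΦk.bind₁ fun i => (isWeightedHomogeneous_wittPolynomial p k).rename (Prod.mk i)

theorem isWeightedHomogeneous_wittStructureInt {Φ : MvPolynomial idx ℤ} {c : ℕ}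
    (hΦ : Φ.IsHomogeneous c) (n : ℕ) :
    IsWeightedHomogeneous (fun bi : idx × ℕ => p ^ bi.2) (wittStructureInt p Φ n) (c * p ^ n) :=
  .of_map Int.cast_injective <| by
    rw [map_wittStructureInt]
    exact isWeightedHomogeneous_wittStructureRat p (hΦ.map _) n

end WittVector

theorem wittAdd_wittMul_weighted_homogeneous (p : ℕ) [hp : Fact p.Prime] (n : ℕ) :
    MvPolynomial.IsWeightedHomogeneous (fun bi : Fin 2 × ℕ => p ^ bi.2)
      (WittVector.wittAdd p n) (p ^ n) ∧
    MvPolynomial.IsWeightedHomogeneous (fun bi : Fin 2 × ℕ => p ^ bi.2)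
      (WittVector.wittMul p n) (2 * p ^ n) := by
  have hAdd : (X 0 + X 1 : MvPolynomial (Fin 2) ℤ).IsHomogeneous 1 :=
    (isHomogeneous_X ℤ 0).add (isHomogeneous_X ℤ 1)
  have hMul : (X 0 * X 1 : MvPolynomial (Fin 2) ℤ).IsHomogeneous 2 :=
    (isHomogeneous_X ℤ 0).mul (isHomogeneous_X ℤ 1)
  constructor
  · simpa [WittVector.wittAdd] using WittVector.isWeightedHomogeneous_wittStructureInt p hAdd n
  · exact WittVector.isWeightedHomogeneous_wittStructureInt p hMul n
end

section
/- Let G be a group and let T and U be finite nonempty transitive G-sets such that there exists at least one G-map from T to U. Then Nat.card(Map_G(T, T)) · Nat.card(U) divides Nat.card(Map_G(T, U)) · Nat.card(T). -/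
/-! Evaluation `(f, t) ↦ f t` maps `Map_G(T, U) × T` to `U` equivariantly, so transitivity of `U`
makes all its fibres equinumerous: `#Map_G(T, U) · #T = #U · #F` for the fibre `F` over any point.
Equivariant self-maps of a finite transitive `G`-set are permutations; they form a group acting
on `F` by `σ • (f, t) = (f ∘ σ⁻¹, σ t)`, freely because an equivariant permutation of a transitive
`G`-set fixing one point is the identity. Hence `#Map_G(T, T)` divides `#F`. -/

def MulActionHom.equivSubtype (G X Y : Type*) [Group G] [MulAction G X] [MulAction G Y] :
    {f : X → Y // ∀ (g : G) (x : X), f (g • x) = g • f x} ≃ (X →[G] Y) where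
  toFun f := ⟨f.1, f.2⟩
  invFun f := ⟨f, map_smul f⟩
  left_inv _ := rfl
  right_inv _ := rfl

namespace MulAction

theorem card_dvd_card_of_isCancelSMul (H Z : Type*) [Group H] [MulAction H Z]
    [IsCancelSMul H Z] : Nat.card H ∣ Nat.card Z :=
  ⟨_, by rw [Nat.card_congr (selfEquivOrbitsQuotientProd (G := H) IsCancelSMul.stabilizer_eq_bot),
    Nat.card_prod, mul_comm]⟩

variable (G X Y : Type*) [Group G] [MulAction G X] [MulAction G Y]

def evalFiber (y : Y) : Type _ := {p : (X →[G] Y) × X // p.1 p.2 = y}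

theorem card_mulActionHom_mul_card_eq [IsPretransitive G Y] (y : Y) :
    Nat.card (X →[G] Y) * Nat.card X = Nat.card Y * Nat.card (evalFiber G X Y y) := by
  have translate (y' : Y) : Nonempty (evalFiber G X Y y' ≃ evalFiber G X Y y) := by
    obtain ⟨g, hg⟩ := exists_smul_eq G y' y
    refine ⟨((Equiv.refl _).prodCongr (toPerm g)).subtypeEquiv fun p => ?_⟩
    simp [map_smul, ← hg]
  rw [← Nat.card_prod, ← Nat.card_prod]
  exact Nat.card_congr <| (Equiv.sigmaFiberEquiv fun p : (X →[G] Y) × X => p.1 p.2).symm.trans <|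
    (Equiv.sigmaCongrRight fun y' => (translate y').some).trans (Equiv.sigmaEquivProd _ _)

def equivariantPerms : Subgroup (Equiv.Perm X) :=
  Subgroup.centralizer (Set.range (toPermHom G X))

variable {G X Y}

theorem mem_equivariantPerms_iff {σ : Equiv.Perm X} :
    σ ∈ equivariantPerms G X ↔ ∀ (g : G) (x : X), σ (g • x) = g • σ x := by
  simp only [equivariantPerms, Subgroup.mem_centralizer_iff, Set.forall_mem_range,
    Equiv.ext_iff, Equiv.Perm.mul_apply, toPermHom_apply, toPerm_apply]
  exact ⟨fun h g x => (h g x).symm, fun h g x => (h g x).symm⟩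

def equivariantPerms.toMulActionHom (σ : equivariantPerms G X) : X →[G] X :=
  ⟨σ, mem_equivariantPerms_iff.1 σ.2⟩

@[simp]
theorem equivariantPerms.toMulActionHom_apply (σ : equivariantPerms G X) (x : X) :
    equivariantPerms.toMulActionHom σ x = (σ : Equiv.Perm X) x :=
  rfl

theorem equivariantPerms.eq_one_of_smul_eq [IsPretransitive G X] {σ : equivariantPerms G X}
    {x : X} (hx : σ • x = x) : σ = 1 := by
  ext x'
  obtain ⟨g, rfl⟩ := exists_smul_eq G x x'
  rw [Subgroup.smul_def, Equiv.Perm.smul_def] at hx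
  simp [mem_equivariantPerms_iff.1 σ.2, hx]

instance (y : Y) : MulAction (equivariantPerms G X) (evalFiber G X Y y) where
  smul σ p := ⟨(p.1.1.comp (equivariantPerms.toMulActionHom σ⁻¹), σ • p.1.2), by
    simpa [Subgroup.smul_def] using p.2⟩
  one_smul _ := rfl
  mul_smul _ _ _ := rfl

instance [IsPretransitive G X] (y : Y) :
    IsCancelSMul (equivariantPerms G X) (evalFiber G X Y y) :=
  isCancelSMul_iff_eq_one_of_smul_eq.2 fun _ _ hp =>
    equivariantPerms.eq_one_of_smul_eq (congrArg (fun q : evalFiber G X Y y => q.1.2) hp)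

theorem surjective_mulActionHom_self [IsPretransitive G X] (f : X →[G] X) :
    Function.Surjective f := fun x =>
  let ⟨g, hg⟩ := exists_smul_eq G (f x) x
  ⟨g • x, by rw [map_smul, hg]⟩

variable (G X)

noncomputable def mulActionHomSelfEquivEquivariantPerms [Finite X] [IsPretransitive G X] :
    (X →[G] X) ≃ equivariantPerms G X where
  toFun f := ⟨Equiv.ofBijective f (surjective_mulActionHom_self f).bijective_of_finite,
    mem_equivariantPerms_iff.2 (map_smul f)⟩
  invFun := equivariantPerms.toMulActionHom
  left_inv _ := rfl
  right_inv _ := Subtype.ext (Equiv.ext fun _ => rfl)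

end MulAction

theorem card_gmaps_self_mul_card_dvd_general {G T U : Type*} [Group G] [MulAction G T] [MulAction G U]
    [Finite T] [Nonempty U]
    [MulAction.IsPretransitive G T] [MulAction.IsPretransitive G U] :
    Nat.card {f : T → T // ∀ (g : G) (t : T), f (g • t) = g • f t} * Nat.card U ∣
      Nat.card {f : T → U // ∀ (g : G) (t : T), f (g • t) = g • f t} * Nat.card T := by
  obtain ⟨u⟩ := ‹Nonempty U›
  rw [Nat.card_congr (MulActionHom.equivSubtype G T T),
    Nat.card_congr (MulAction.mulActionHomSelfEquivEquivariantPerms G T),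
    Nat.card_congr (MulActionHom.equivSubtype G T U),
    MulAction.card_mulActionHom_mul_card_eq G T U u, mul_comm (Nat.card U)]
  exact mul_dvd_mul_right (MulAction.card_dvd_card_of_isCancelSMul _ _) _

theorem card_gmaps_self_mul_card_dvd {G T U : Type*} [Group G] [MulAction G T] [MulAction G U]
    [Finite T] [Finite U] [Nonempty T] [Nonempty U]
    [MulAction.IsPretransitive G T] [MulAction.IsPretransitive G U]
    (h : ∃ f : T → U, ∀ (g : G) (t : T), f (g • t) = g • f t) :
    Nat.card {f : T → T // ∀ (g : G) (t : T), f (g • t) = g • f t} * Nat.card U ∣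
      Nat.card {f : T → U // ∀ (g : G) (t : T), f (g • t) = g • f t} * Nat.card T :=
  card_gmaps_self_mul_card_dvd_general
end

section
/- Let G be a group and let T and U be finite nonempty transitive G-sets such that the stabilizer of every point of T is a normal subgroup of G and there exists at least one G-map from T to U. Then Nat.card(Map_G(T, U)) = Nat.card(U). -/
theorem card_gmaps_of_normal_stabilizers {G T U : Type*} [Group G] [MulAction G T] [MulAction G U]
    [Finite T] [Finite U] [Nonempty T] [Nonempty U]
    [MulAction.IsPretransitive G T] [MulAction.IsPretransitive G U]
    (hnorm : ∀ t : T, (MulAction.stabilizer G t).Normal)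
    (h : ∃ f : T → U, ∀ (g : G) (t : T), f (g • t) = g • f t) :
    Nat.card {f : T → U // ∀ (g : G) (t : T), f (g • t) = g • f t} = Nat.card U := by
  classical
  obtain ⟨f₀, hf₀⟩ := h
  obtain ⟨t₀⟩ := ‹Nonempty T›
  -- key: stabilizer of t₀ fixes every point of U
  have key : ∀ (g : G) (u : U), g • t₀ = t₀ → g • u = u := by
    intro g u hg
    obtain ⟨k, hk⟩ := MulAction.exists_smul_eq G (f₀ t₀) u
    have hstab : g ∈ MulAction.stabilizer G t₀ := hg
    have h2 : k⁻¹ * g * k ∈ MulAction.stabilizer G t₀ := by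
      have := (hnorm t₀).conj_mem g hstab k⁻¹
      simpa using this
    have h3 : (k⁻¹ * g * k) • f₀ t₀ = f₀ t₀ := by
      have h4 : (k⁻¹ * g * k) • t₀ = t₀ := h2
      calc (k⁻¹ * g * k) • f₀ t₀ = f₀ ((k⁻¹ * g * k) • t₀) := (hf₀ _ _).symm
        _ = f₀ t₀ := by rw [h4]
    calc g • u = g • (k • f₀ t₀) := by rw [hk]
      _ = k • ((k⁻¹ * g * k) • f₀ t₀) := by rw [smul_smul, smul_smul]; group
      _ = k • f₀ t₀ := by rw [h3]
      _ = u := hk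
  -- choice of group elements
  have hch : ∀ x : T, ∃ g : G, g • t₀ = x := fun x => MulAction.exists_smul_eq G t₀ x
  choose c hc using hch
  -- the evaluation map is bijective
  have hbij : Function.Bijective
      (fun f : {f : T → U // ∀ (g : G) (t : T), f (g • t) = g • f t} => f.1 t₀) := by
    constructor
    · rintro ⟨f, hf⟩ ⟨f', hf'⟩ hval
      simp only at hval
      ext x
      have : f (c x • t₀) = f' (c x • t₀) := by rw [hf, hf', hval]
      rwa [hc] at this
    · intro u
      refine ⟨⟨fun x => c x • u, ?_⟩, ?_⟩
      · intro g x
        have h1 : ((g * c x)⁻¹ * c (g • x)) • t₀ = t₀ := by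
          rw [mul_smul, hc, inv_smul_eq_iff, mul_smul, hc]
        have h2 := key _ u h1
        rw [mul_smul, inv_smul_eq_iff, mul_smul] at h2
        simpa using h2
      · exact key _ u (hc t₀)
  exact Nat.card_eq_of_bijective _ hbij
end

section
/- Let p be a prime, G a finite abelian p-group, and T, T₁, T₂ finite nonempty transitive G-sets such that there exist G-maps T → T₁ and T → T₂ and Nat.card(T) < Nat.card(T₁) · Nat.card(T₂). Then p · Nat.card(Map_G(T, T)) divides Nat.card(Map_G(T, T₁)) · Nat.card(Map_G(T, T₂)). -/
open MulAction

-- stabilizer of any point contains stabilizer of t₀, given a G-map and transitivity, G comm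
lemma stab_le_of_map {G : Type*} [CommGroup G] {T U : Type*} [MulAction G T] [MulAction G U]
    [MulAction.IsPretransitive G U]
    (f₀ : T → U) (hf₀ : ∀ (g : G) (t : T), f₀ (g • t) = g • f₀ t)
    (t₀ : T) (u : U) : stabilizer G t₀ ≤ stabilizer G u := by
  intro h hh
  simp only [mem_stabilizer_iff] at hh ⊢
  obtain ⟨k, hk⟩ := MulAction.exists_smul_eq G (f₀ t₀) u
  have : h • f₀ t₀ = f₀ t₀ := by rw [← hf₀, hh]
  rw [← hk, smul_smul, mul_comm, ← smul_smul, this]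

lemma card_maps {G : Type*} [CommGroup G] {T U : Type*} [MulAction G T] [MulAction G U]
    [MulAction.IsPretransitive G T] [MulAction.IsPretransitive G U] [Nonempty T]
    (h : ∃ f : T → U, ∀ (g : G) (t : T), f (g • t) = g • f t) :
    Nat.card {f : T → U // ∀ (g : G) (t : T), f (g • t) = g • f t} = Nat.card U := by
  obtain ⟨f₀, hf₀⟩ := h
  obtain ⟨t₀⟩ := ‹Nonempty T›
  apply Nat.card_eq_of_bijective (fun f => f.1 t₀)
  constructor
  · rintro ⟨f, hf⟩ ⟨f', hf'⟩ h
    simp only at h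
    ext t
    obtain ⟨g, hg⟩ := MulAction.exists_smul_eq G t₀ t
    simp only [← hg, hf, hf', h]
  · intro u
    have hσ : ∀ t : T, ∃ g : G, g • t₀ = t := fun t => MulAction.exists_smul_eq G t₀ t
    choose σ hσ using hσ
    refine ⟨⟨fun t => σ t • u, ?_⟩, ?_⟩
    · intro g t
      have key : (g * σ t)⁻¹ * σ (g • t) ∈ stabilizer G t₀ := by
        rw [mem_stabilizer_iff, mul_smul, hσ, inv_smul_eq_iff, mul_smul, hσ]
      have := stab_le_of_map f₀ hf₀ t₀ u key
      rw [mem_stabilizer_iff] at this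
      calc σ (g • t) • u = ((g * σ t) * ((g * σ t)⁻¹ * σ (g • t))) • u := by
            rw [mul_inv_cancel_left]
          _ = (g * σ t) • ((g * σ t)⁻¹ * σ (g • t)) • u := by rw [mul_smul]
          _ = g • σ t • u := by rw [this, mul_smul]
    · simp only
      have : σ t₀ ∈ stabilizer G t₀ := hσ t₀
      have := stab_le_of_map f₀ hf₀ t₀ u this
      rwa [mem_stabilizer_iff] at this

lemma card_pow {p : ℕ} [hp : Fact p.Prime] {G : Type*} [Group G] [Finite G]
    (hG : IsPGroup p G) {T : Type*} [MulAction G T] [Finite T] [Nonempty T]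
    [MulAction.IsPretransitive G T] : ∃ n, Nat.card T = p ^ n := by
  obtain ⟨n, hn⟩ := IsPGroup.iff_card.mp hG
  obtain ⟨t₀⟩ := ‹Nonempty T›
  have h1 : Nat.card T = (stabilizer G t₀).index := (index_stabilizer_of_transitive G t₀).symm
  have h2 : (stabilizer G t₀).index ∣ Nat.card G := Subgroup.index_dvd_card _
  rw [← h1, hn] at h2
  exact (Nat.dvd_prime_pow hp.out).mp h2 |>.imp fun k ⟨_, hk⟩ => hk

theorem ratio_property_of_abelian_pGroup (p : ℕ) [hp : Fact p.Prime]
    {G : Type*} [CommGroup G] [Finite G] (hG : IsPGroup p G)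
    {T T₁ T₂ : Type*} [MulAction G T] [MulAction G T₁] [MulAction G T₂]
    [Finite T] [Finite T₁] [Finite T₂] [Nonempty T] [Nonempty T₁] [Nonempty T₂]
    [MulAction.IsPretransitive G T] [MulAction.IsPretransitive G T₁]
    [MulAction.IsPretransitive G T₂]
    (h1 : ∃ f : T → T₁, ∀ (g : G) (t : T), f (g • t) = g • f t)
    (h2 : ∃ f : T → T₂, ∀ (g : G) (t : T), f (g • t) = g • f t)
    (hcard : Nat.card T < Nat.card T₁ * Nat.card T₂) :
    p * Nat.card {f : T → T // ∀ (g : G) (t : T), f (g • t) = g • f t} ∣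
      Nat.card {f : T → T₁ // ∀ (g : G) (t : T), f (g • t) = g • f t} *
        Nat.card {f : T → T₂ // ∀ (g : G) (t : T), f (g • t) = g • f t} := by
  rw [card_maps h1, card_maps h2, card_maps ⟨id, fun _ _ => rfl⟩]
  obtain ⟨a, ha⟩ := card_pow hG (T := T)
  obtain ⟨b, hb⟩ := card_pow hG (T := T₁)
  obtain ⟨c, hc⟩ := card_pow hG (T := T₂)
  rw [ha, hb, hc] at hcard ⊢
  rw [← pow_succ', ← pow_add]
  apply pow_dvd_pow
  rw [← pow_add] at hcard
  have := (pow_lt_pow_iff_right₀ hp.out.one_lt).mp hcard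
  omega
end

section
/- Let p be a prime. Let L be the set of functions f : ℤ_p → ℤ_p that are Lipschitz with constant p⁻¹ (i.e., ‖f x − f y‖ ≤ p⁻¹·‖x − y‖ for all x, y); L is a subring of the ring of all functions ℤ_p → ℤ_p with pointwise operations. Let 𝒰 be a nonprincipal ultrafilter on ℤ_p containing a countable subset D ⊆ ℤ_p that is discrete in the subspace topology, and let σ : ℤ_p → ℤ_p be any function. Define P = { f ∈ L : ∃ A ∈ 𝒰, A ⊆ D, ∃ c ∈ ℝ, c > 0, ∀ z ∈ A, ‖f z‖ ≤ ‖σ z‖^c } (real exponentiation). Then P is an ideal of L, and whenever f, g ∈ L satisfy f·g ∈ P, either f ∈ P or g ∈ P. -/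
private lemma rpow_le_rpow_exp {x : ℝ} (hx0 : 0 ≤ x) (hx1 : x ≤ 1) {c d : ℝ}
    (hd : 0 < d) (hdc : d ≤ c) : x ^ c ≤ x ^ d := by
  rcases hx0.eq_or_lt with h | h
  · rw [← h, Real.zero_rpow (by linarith : c ≠ 0), Real.zero_rpow hd.ne']
  · exact Real.rpow_le_rpow_of_exponent_ge h hx1 hdc

private noncomputable def lipSubring (p : ℕ) [Fact p.Prime] : Subring (ℤ_[p] → ℤ_[p]) where
  carrier := {f | ∀ x y : ℤ_[p], ‖f x - f y‖ ≤ (p : ℝ)⁻¹ * ‖x - y‖}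
  one_mem' := fun x y => by
    have : (0:ℝ) ≤ (p:ℝ)⁻¹ * ‖x - y‖ := by positivity
    simp [this]
  mul_mem' := by
    intro a b ha hb x y
    show ‖a x * b x - a y * b y‖ ≤ _
    have hnn : (0:ℝ) ≤ (p:ℝ)⁻¹ * ‖x - y‖ := by positivity
    have key : a x * b x - a y * b y = a x * (b x - b y) + (a x - a y) * b y := by ring
    rw [key]
    refine le_trans (PadicInt.nonarchimedean _ _) (max_le ?_ ?_)
    · rw [norm_mul]
      calc ‖a x‖ * ‖b x - b y‖ ≤ 1 * ((p:ℝ)⁻¹ * ‖x - y‖) :=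
            mul_le_mul (PadicInt.norm_le_one _) (hb x y) (norm_nonneg _) zero_le_one
        _ = (p:ℝ)⁻¹ * ‖x - y‖ := one_mul _
    · rw [norm_mul]
      calc ‖a x - a y‖ * ‖b y‖ ≤ ((p:ℝ)⁻¹ * ‖x - y‖) * 1 :=
            mul_le_mul (ha x y) (PadicInt.norm_le_one _) (norm_nonneg _) hnn
        _ = (p:ℝ)⁻¹ * ‖x - y‖ := mul_one _
  zero_mem' := fun x y => by
    have : (0:ℝ) ≤ (p:ℝ)⁻¹ * ‖x - y‖ := by positivity
    simp [this]
  add_mem' := by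
    intro a b ha hb x y
    show ‖(a x + b x) - (a y + b y)‖ ≤ _
    have key : (a x + b x) - (a y + b y) = (a x - a y) + (b x - b y) := by ring
    rw [key]
    exact le_trans (PadicInt.nonarchimedean _ _) (max_le (ha x y) (hb x y))
  neg_mem' := by
    intro a ha x y
    show ‖(-a x) - (-a y)‖ ≤ _
    have key : (-a x) - (-a y) = -(a x - a y) := by ring
    rw [key, norm_neg]; exact ha x y

private noncomputable def sigmaIdeal (p : ℕ) [Fact p.Prime] (𝒰 : Ultrafilter ℤ_[p]) (D : Set ℤ_[p])
    (hD𝒰 : D ∈ 𝒰) (σ : ℤ_[p] → ℤ_[p]) : Ideal (lipSubring p) where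
  carrier := {f | ∃ A ∈ 𝒰, A ⊆ D ∧ ∃ c : ℝ, 0 < c ∧
    ∀ z ∈ A, ‖(f : ℤ_[p] → ℤ_[p]) z‖ ≤ ‖σ z‖ ^ c}
  zero_mem' := ⟨D, hD𝒰, le_refl D, 1, one_pos, fun z _ => by
    show ‖(0:ℤ_[p])‖ ≤ _
    rw [norm_zero]; positivity⟩
  add_mem' := by
    rintro a b ⟨A, hA, hAD, c, hc, hfa⟩ ⟨B, hB, hBD, d, hd, hfb⟩
    refine ⟨A ∩ B, 𝒰.toFilter.inter_mem hA hB, fun z hz => hAD hz.1, min c d,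
      lt_min hc hd, fun z hz => ?_⟩
    show ‖(a : ℤ_[p] → ℤ_[p]) z + (b : ℤ_[p] → ℤ_[p]) z‖ ≤ _
    refine le_trans (PadicInt.nonarchimedean _ _) (max_le ?_ ?_)
    · exact le_trans (hfa z hz.1) (rpow_le_rpow_exp (norm_nonneg _)
        (PadicInt.norm_le_one _) (lt_min hc hd) (min_le_left _ _))
    · exact le_trans (hfb z hz.2) (rpow_le_rpow_exp (norm_nonneg _)
        (PadicInt.norm_le_one _) (lt_min hc hd) (min_le_right _ _))
  smul_mem' := by
    rintro g a ⟨A, hA, hAD, c, hc, hfa⟩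
    refine ⟨A, hA, hAD, c, hc, fun z hz => ?_⟩
    show ‖(g : ℤ_[p] → ℤ_[p]) z * (a : ℤ_[p] → ℤ_[p]) z‖ ≤ _
    rw [norm_mul]
    calc ‖(g : ℤ_[p] → ℤ_[p]) z‖ * ‖(a : ℤ_[p] → ℤ_[p]) z‖
        ≤ 1 * (‖σ z‖ ^ c) :=
          mul_le_mul (PadicInt.norm_le_one _) (hfa z hz) (norm_nonneg _) zero_le_one
      _ = ‖σ z‖ ^ c := one_mul _

theorem ultrafilter_prime_ideal_in_lipschitz_ring (p : ℕ) [hp : Fact p.Prime]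
    (𝒰 : Ultrafilter ℤ_[p]) (hnonpr : ∀ S : Set ℤ_[p], S.Finite → S ∉ 𝒰)
    (D : Set ℤ_[p]) (hD𝒰 : D ∈ 𝒰) (hDcount : D.Countable) (hDdisc : DiscreteTopology D)
    (σ : ℤ_[p] → ℤ_[p]) :
    ∃ L : Subring (ℤ_[p] → ℤ_[p]),
      (L : Set (ℤ_[p] → ℤ_[p])) =
        {f | ∀ x y : ℤ_[p], ‖f x - f y‖ ≤ (p : ℝ)⁻¹ * ‖x - y‖} ∧
      ∃ P : Ideal L,
        (∀ f : L, f ∈ P ↔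
          ∃ A ∈ 𝒰, A ⊆ D ∧ ∃ c : ℝ, 0 < c ∧
            ∀ z ∈ A, ‖(f : ℤ_[p] → ℤ_[p]) z‖ ≤ ‖σ z‖ ^ c) ∧
        (∀ f g : L, f * g ∈ P → f ∈ P ∨ g ∈ P) := by
  refine ⟨lipSubring p, rfl, sigmaIdeal p 𝒰 D hD𝒰 σ, fun f => Iff.rfl, ?_⟩
  rintro f g ⟨A, hA, hAD, c, hc, hfg⟩
  set Af := {z ∈ A | ‖(f : ℤ_[p] → ℤ_[p]) z‖ ≤ ‖σ z‖ ^ (c/2)} with hAf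
  set Ag := {z ∈ A | ‖(g : ℤ_[p] → ℤ_[p]) z‖ ≤ ‖σ z‖ ^ (c/2)} with hAg
  have hsq : ∀ z : ℤ_[p], ‖σ z‖ ^ (c/2) * ‖σ z‖ ^ (c/2) = ‖σ z‖ ^ c := by
    intro z
    rcases (norm_nonneg (σ z)).eq_or_lt with h | h
    · rw [← h, Real.zero_rpow (by linarith : c/2 ≠ 0),
        Real.zero_rpow (by linarith : c ≠ 0), mul_zero]
    · rw [← Real.rpow_add h]; norm_num
  have hcover : A ⊆ Af ∪ Ag := by
    intro z hz
    by_cases hf : ‖(f : ℤ_[p] → ℤ_[p]) z‖ ≤ ‖σ z‖ ^ (c/2)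
    · exact Or.inl ⟨hz, hf⟩
    · refine Or.inr ⟨hz, ?_⟩
      by_contra hg
      push_neg at hf hg
      have h1 : ‖σ z‖ ^ (c/2) * ‖σ z‖ ^ (c/2) <
          ‖(f : ℤ_[p] → ℤ_[p]) z‖ * ‖(g : ℤ_[p] → ℤ_[p]) z‖ :=
        mul_lt_mul'' hf hg (by positivity) (by positivity)
      have h2 := hfg z hz
      rw [show ((f * g : lipSubring p) : ℤ_[p] → ℤ_[p]) z
            = (f : ℤ_[p] → ℤ_[p]) z * (g : ℤ_[p] → ℤ_[p]) z from rfl,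
        norm_mul] at h2
      rw [hsq z] at h1
      linarith
  have hmem : Af ∪ Ag ∈ 𝒰 := 𝒰.toFilter.mem_of_superset hA hcover
  rcases (Ultrafilter.union_mem_iff.mp hmem) with h | h
  · exact Or.inl ⟨Af, h, fun z hz => hAD hz.1, c/2, by linarith, fun z hz => hz.2⟩
  · exact Or.inr ⟨Ag, h, fun z hz => hAD hz.1, c/2, by linarith, fun z hz => hz.2⟩
end

section
/- Let p be a prime. Let L be the set of functions f : ℤ_p → ℤ_p that are Lipschitz with constant p⁻¹ (i.e., ‖f x − f y‖ ≤ p⁻¹·‖x − y‖ for all x, y); L is a subring of the ring of all functions ℤ_p → ℤ_p with pointwise operations. Then the commutative ring L has infinite Krull dimension: there exist strictly decreasing chains of prime ideals of L of arbitrary finite length (equivalently, ringKrullDim L = ⊤). -/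
/-!
Fix a nonprincipal ultrafilter `U` on `ℕ`. For each `c`, the Lipschitz functions `f` for which
`v(f(p ^ n))` exceeds every multiple of `n ^ c` for `U`-almost all `n` form an ideal `P c`, which
is prime because `U` is an ultrafilter and the valuation is additive. The `P c` decrease in `c`,
strictly: `x ↦ p ^ (v(x) ^ (c + 1) + 1)` lies in `P c` but not in `P (c + 1)`, and it is
`p⁻¹`-Lipschitz because it depends only on `‖x‖` and is bounded by `p⁻¹ ‖x‖`, which in an
ultrametric space suffices.
-/

open Filter
open scoped NNReal

lemma IsUltrametricDist.norm_sub_le_of_norm_eq_imp_eq {E F : Type*}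
    [SeminormedAddCommGroup E] [IsUltrametricDist E]
    [SeminormedAddCommGroup F] [IsUltrametricDist F]
    {f : E → F} {K : ℝ} (hK : 0 ≤ K) (hf : ∀ x y, ‖x‖ = ‖y‖ → f x = f y)
    (hbound : ∀ x, ‖f x‖ ≤ K * ‖x‖) (x y : E) :
    ‖f x - f y‖ ≤ K * ‖x - y‖ := by
  by_cases hxy : ‖x‖ = ‖y‖
  · rw [hf x y hxy, sub_self, norm_zero]
    positivity
  have hdist : ‖x - y‖ = max ‖x‖ ‖y‖ := by
    rw [sub_eq_add_neg, norm_add_eq_max_of_norm_ne_norm (by rwa [norm_neg]), norm_neg]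
  calc ‖f x - f y‖ = ‖f x + -f y‖ := by rw [sub_eq_add_neg]
    _ ≤ max ‖f x‖ ‖-f y‖ := norm_add_le_max _ _
    _ ≤ max (K * ‖x‖) (K * ‖y‖) := by rw [norm_neg]; exact max_le_max (hbound x) (hbound y)
    _ = K * ‖x - y‖ := by rw [hdist, mul_max_of_nonneg _ _ hK]

lemma infiniteDimensionalOrder_of_strictAnti {α : Type*} [Preorder α] {f : ℕ → α}
    (hf : StrictAnti f) : InfiniteDimensionalOrder α :=
  ⟨fun n => ⟨LTSeries.mk n (fun i : Fin (n + 1) => f i.rev)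
    fun _ _ hij => hf (Fin.rev_strictAnti hij), rfl⟩⟩

lemma Nat.eventually_hyperfilter_ne_zero : ∀ᶠ n in hyperfilter ℕ, n ≠ 0 :=
  Nat.hyperfilter_le_atTop (eventually_ne_atTop 0)

namespace PadicInt

variable {p : ℕ} [Fact p.Prime]

lemma inv_prime_pos : (0 : ℝ) < (p : ℝ)⁻¹ := by
  have := (Fact.out : p.Prime).pos
  positivity

lemma inv_prime_lt_one : (p : ℝ)⁻¹ < 1 :=
  inv_lt_one_of_one_lt₀ (by exact_mod_cast (Fact.out : p.Prime).one_lt)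

lemma norm_p_pow_eq_inv_pow (k : ℕ) : ‖(p : ℤ_[p]) ^ k‖ = (p : ℝ)⁻¹ ^ k := by
  rw [norm_pow, norm_p]

lemma norm_eq_inv_pow_valuation {x : ℤ_[p]} (hx : x ≠ 0) : ‖x‖ = (p : ℝ)⁻¹ ^ x.valuation := by
  rw [norm_eq_zpow_neg_valuation hx, zpow_neg, zpow_natCast, inv_pow]

lemma norm_mul_le_norm_right (a b : ℤ_[p]) : ‖a * b‖ ≤ ‖b‖ := by
  rw [norm_mul]
  exact mul_le_of_le_one_left (norm_nonneg b) (norm_le_one a)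

variable (p) in
def lipschitzSubring (E : Type*) [SeminormedAddCommGroup E] (K : ℝ≥0) : Subring (E → ℤ_[p]) where
  carrier := {f | ∀ x y, ‖f x - f y‖ ≤ K * ‖x - y‖}
  zero_mem' x y := by
    simp only [Pi.zero_apply, sub_self, norm_zero]
    positivity
  one_mem' x y := by
    simp only [Pi.one_apply, sub_self, norm_zero]
    positivity
  add_mem' {f g} hf hg x y := calc
    ‖(f + g) x - (f + g) y‖ = ‖(f x - f y) + (g x - g y)‖ := by
      rw [Pi.add_apply, Pi.add_apply, add_sub_add_comm]
    _ ≤ max ‖f x - f y‖ ‖g x - g y‖ := IsUltrametricDist.norm_add_le_max _ _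
    _ ≤ K * ‖x - y‖ := max_le (hf x y) (hg x y)
  neg_mem' {f} hf x y := by
    rw [Pi.neg_apply, Pi.neg_apply, neg_sub_neg, norm_sub_rev]
    exact hf x y
  mul_mem' {f g} hf hg x y := calc
    ‖(f * g) x - (f * g) y‖ = ‖f x * (g x - g y) + (f x - f y) * g y‖ := by
      rw [Pi.mul_apply, Pi.mul_apply]
      ring_nf
    _ ≤ max ‖f x * (g x - g y)‖ ‖(f x - f y) * g y‖ := IsUltrametricDist.norm_add_le_max _ _
    _ ≤ K * ‖x - y‖ := by
      refine max_le ((norm_mul_le_norm_right _ _).trans (hg x y)) ?_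
      rw [mul_comm]
      exact (norm_mul_le_norm_right _ _).trans (hf x y)

variable {ι : Type*}

variable (p) in
/-- Sequences whose valuations eventually exceed every multiple of `r`. -/
def decayIdeal (l : Filter ι) (r : ι → ℕ) : Ideal (ι → ℤ_[p]) where
  carrier := {g | ∀ M : ℕ, ∀ᶠ i in l, ‖g i‖ ≤ (p : ℝ)⁻¹ ^ (M * r i)}
  zero_mem' M := Eventually.of_forall fun i => by
    rw [Pi.zero_apply, norm_zero]
    exact pow_nonneg inv_prime_pos.le _
  add_mem' {f g} hf hg M := by
    filter_upwards [hf M, hg M] with i hfi hgi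
    exact (IsUltrametricDist.norm_add_le_max _ _).trans (max_le hfi hgi)
  smul_mem' a {g} hg M := by
    filter_upwards [hg M] with i hgi
    exact (norm_mul_le_norm_right _ _).trans hgi

lemma mem_decayIdeal {l : Filter ι} {r : ι → ℕ} {g : ι → ℤ_[p]} :
    g ∈ decayIdeal p l r ↔ ∀ M : ℕ, ∀ᶠ i in l, ‖g i‖ ≤ (p : ℝ)⁻¹ ^ (M * r i) :=
  Iff.rfl

lemma notMem_decayIdeal_iff {U : Ultrafilter ι} {r : ι → ℕ} {g : ι → ℤ_[p]} :
    g ∉ decayIdeal p U r ↔ ∃ M : ℕ, ∀ᶠ i in U, (p : ℝ)⁻¹ ^ (M * r i) < ‖g i‖ := by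
  simp only [mem_decayIdeal, not_forall, ← Ultrafilter.eventually_not, not_le]

lemma decayIdeal_anti {l : Filter ι} {r s : ι → ℕ} (hrs : ∀ᶠ i in l, r i ≤ s i) :
    decayIdeal p l s ≤ decayIdeal p l r := fun g hg M => by
  filter_upwards [hg M, hrs] with i hgi hri
  exact hgi.trans (pow_le_pow_of_le_one inv_prime_pos.le inv_prime_lt_one.le
    (Nat.mul_le_mul_left M hri))

theorem decayIdeal_isPrime {U : Ultrafilter ι} {r : ι → ℕ} (hr : ∀ᶠ i in U, r i ≠ 0) :
    (decayIdeal p U r).IsPrime := by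
  refine Ideal.isPrime_iff.2 ⟨fun htop => ?_, fun {f g} hfg => ?_⟩
  · obtain ⟨i, hi, hri⟩ := ((htop ▸ Submodule.mem_top : (1 : ι → ℤ_[p]) ∈ _) 1).and hr |>.exists
    rw [Pi.one_apply, norm_one, one_mul] at hi
    exact hi.not_gt (pow_lt_one₀ inv_prime_pos.le inv_prime_lt_one hri)
  · by_contra! hfg'
    obtain ⟨⟨Mf, hf⟩, ⟨Mg, hg⟩⟩ := And.imp notMem_decayIdeal_iff.1 notMem_decayIdeal_iff.1 hfg'
    refine notMem_decayIdeal_iff.2 ⟨Mf + Mg, ?_⟩ hfg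
    filter_upwards [hf, hg] with i hfi hgi
    rw [Pi.mul_apply, norm_mul, add_mul, pow_add]
    exact mul_lt_mul'' hfi hgi (pow_nonneg inv_prime_pos.le _) (pow_nonneg inv_prime_pos.le _)

lemma pow_succ_add_one_mem_decayIdeal (c : ℕ) :
    (fun n => (p : ℤ_[p]) ^ (n ^ (c + 1) + 1)) ∈ decayIdeal p (hyperfilter ℕ) (· ^ c) := by
  intro M
  filter_upwards [Nat.hyperfilter_le_atTop (eventually_ge_atTop M)] with n hn
  rw [norm_p_pow_eq_inv_pow]
  refine pow_le_pow_of_le_one inv_prime_pos.le inv_prime_lt_one.le ?_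
  calc M * n ^ c ≤ n * n ^ c := Nat.mul_le_mul_right _ hn
    _ ≤ n ^ (c + 1) + 1 := by rw [← pow_succ']; omega

lemma pow_succ_add_one_notMem_decayIdeal (c : ℕ) :
    (fun n => (p : ℤ_[p]) ^ (n ^ (c + 1) + 1)) ∉ decayIdeal p (hyperfilter ℕ) (· ^ (c + 1)) := by
  refine notMem_decayIdeal_iff.2 ⟨2, ?_⟩
  filter_upwards [Nat.hyperfilter_le_atTop (eventually_gt_atTop 1)] with n hn
  rw [norm_p_pow_eq_inv_pow]
  refine pow_lt_pow_right_of_lt_one₀ inv_prime_pos inv_prime_lt_one ?_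
  have := Nat.one_lt_pow (n := c + 1) (by omega) hn
  omega

noncomputable def evalPowHom (S : Subring (ℤ_[p] → ℤ_[p])) : S →+* (ℕ → ℤ_[p]) :=
  (RingHom.pi fun n => Pi.evalRingHom _ ((p : ℤ_[p]) ^ n)).comp S.subtype

/-- The paper's valuation-growth prime attached to the exponent `c`, supported on `{p ^ n}`. -/
noncomputable def growthIdeal (S : Subring (ℤ_[p] → ℤ_[p])) (c : ℕ) : Ideal S :=
  (decayIdeal p (hyperfilter ℕ) (· ^ c)).comap (evalPowHom S)

variable (S : Subring (ℤ_[p] → ℤ_[p]))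

theorem growthIdeal_isPrime (c : ℕ) : (growthIdeal S c).IsPrime :=
  haveI := decayIdeal_isPrime (p := p)
    (Nat.eventually_hyperfilter_ne_zero.mono fun _ hn => pow_ne_zero c hn)
  Ideal.IsPrime.comap _

lemma growthIdeal_antitone : Antitone (growthIdeal S) := fun _ _ hcd =>
  Ideal.comap_mono <| decayIdeal_anti <|
    Nat.eventually_hyperfilter_ne_zero.mono fun _ hn => Nat.pow_le_pow_right
      (Nat.pos_of_ne_zero hn) hcd

open Classical in
variable (p) in
noncomputable def radialPow (e : ℕ → ℕ) (x : ℤ_[p]) : ℤ_[p] :=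
  if x = 0 then 0 else (p : ℤ_[p]) ^ e x.valuation

lemma radialPow_p_pow (e : ℕ → ℕ) (n : ℕ) :
    radialPow p e ((p : ℤ_[p]) ^ n) = (p : ℤ_[p]) ^ e n := by
  rw [radialPow, if_neg (pow_ne_zero n (Nat.cast_ne_zero.2 (Fact.out : p.Prime).ne_zero)),
    valuation_pow, valuation_p, mul_one]

lemma radialPow_eq_of_norm_eq (e : ℕ → ℕ) {x y : ℤ_[p]} (hxy : ‖x‖ = ‖y‖) :
    radialPow p e x = radialPow p e y := by
  by_cases hx : x = 0
  · rw [hx, norm_zero, eq_comm, norm_eq_zero] at hxy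
    rw [hx, hxy]
  have hy : y ≠ 0 := by rwa [← norm_ne_zero_iff, ← hxy, norm_ne_zero_iff]
  rw [norm_eq_inv_pow_valuation hx, norm_eq_inv_pow_valuation hy] at hxy
  rw [radialPow, radialPow, if_neg hx, if_neg hy,
    pow_right_injective₀ inv_prime_pos inv_prime_lt_one.ne hxy]

lemma norm_radialPow_le {e : ℕ → ℕ} (he : ∀ n, n < e n) (x : ℤ_[p]) :
    ‖radialPow p e x‖ ≤ (p : ℝ)⁻¹ * ‖x‖ := by
  by_cases hx : x = 0
  · simp [radialPow, hx]
  rw [radialPow, if_neg hx, norm_p_pow_eq_inv_pow, norm_eq_inv_pow_valuation hx, ← pow_succ']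
  exact pow_le_pow_of_le_one inv_prime_pos.le inv_prime_lt_one.le (he _)

lemma radialPow_mem_lipschitzSubring {e : ℕ → ℕ} (he : ∀ n, n < e n) :
    radialPow p e ∈ lipschitzSubring p ℤ_[p] (p : ℝ≥0)⁻¹ := by
  intro x y
  rw [NNReal.coe_inv, NNReal.coe_natCast]
  exact IsUltrametricDist.norm_sub_le_of_norm_eq_imp_eq inv_prime_pos.le
    (fun _ _ => radialPow_eq_of_norm_eq e) (norm_radialPow_le he) x y

theorem growthIdeal_succ_lt {c : ℕ} (hS : radialPow p (fun n => n ^ (c + 1) + 1) ∈ S) :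
    growthIdeal S (c + 1) < growthIdeal S c := by
  have hval : evalPowHom S ⟨_, hS⟩ = fun n => (p : ℤ_[p]) ^ (n ^ (c + 1) + 1) :=
    funext fun n => radialPow_p_pow (fun n => n ^ (c + 1) + 1) n
  refine SetLike.lt_iff_le_and_exists.2 ⟨growthIdeal_antitone S c.le_succ, ⟨_, hS⟩, ?_, ?_⟩
  · rw [growthIdeal, Ideal.mem_comap, hval]
    exact pow_succ_add_one_mem_decayIdeal c
  · rw [growthIdeal, Ideal.mem_comap, hval]
    exact pow_succ_add_one_notMem_decayIdeal c

end PadicInt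

theorem lipschitz_ring_infinite_krull_dimension (p : ℕ) [hp : Fact p.Prime] :
    ∃ L : Subring (ℤ_[p] → ℤ_[p]),
      (L : Set (ℤ_[p] → ℤ_[p])) =
        {f | ∀ x y : ℤ_[p], ‖f x - f y‖ ≤ (p : ℝ)⁻¹ * ‖x - y‖} ∧
      (∀ n : ℕ, ∃ c : Fin (n + 1) → Ideal L, (∀ i, (c i).IsPrime) ∧ StrictAnti c) ∧
      ringKrullDim L = ⊤ := by
  open PadicInt in
  set L := lipschitzSubring p ℤ_[p] (p : ℝ≥0)⁻¹
  have hchain : StrictAnti (growthIdeal L) := strictAnti_nat_of_succ_lt fun c =>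
    growthIdeal_succ_lt L (radialPow_mem_lipschitzSubring fun n =>
      Nat.lt_succ_of_le (Nat.le_self_pow c.succ_ne_zero n))
  refine ⟨L, by ext; simp [L, lipschitzSubring], fun n => ⟨fun i => growthIdeal L i,
    fun i => growthIdeal_isPrime L i, hchain.comp_strictMono Fin.val_strictMono⟩, ?_⟩
  have := infiniteDimensionalOrder_of_strictAnti (α := PrimeSpectrum L)
    (f := fun c => ⟨growthIdeal L c, growthIdeal_isPrime L c⟩) fun _ _ hcd => hchain hcd
  exact Order.krullDim_eq_top
end
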